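/- arXiv:2404.09057 — 2 statements merged into one kernel-verified Lean document; each statement's English description precedes it below -/
import Mathlib

section
/- Let t be the integer array with t(i,1) = 1, t(1,j) = g(j) (where g(1) = 1, g(2) = -2, g(3) = 2, g(4) = -10, and g(j) = -g(j-1) + 3g(j-2) - g(j-3) for j ≥ 5), and t(i,j) = t(i-1,j-1) + t(i-1,j) + t(i,j-1) for i,j ≥ 2. Then for every n ≥ 1 and every j ≥ 1, the signed convolution Σ_{k=1}^{j} (-1)^{k-1} · t(n,k) · t(n,j+1-k) equals 1 if j = 1 and equals 0 if j ≥ 2. -/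
/-- First-row sequence: `g 1 = 1`, `g 2 = -2`, `g 3 = 2`, `g 4 = -10`, and
`g j = -g (j-1) + 3·g (j-2) - g (j-3)` for `j ≥ 5`. (`g 0` is a junk value.) -/
def gseq : ℕ → ℤ
  | 0 => 0
  | 1 => 1
  | 2 => -2
  | 3 => 2
  | 4 => -10
  | j + 5 => -gseq (j + 4) + 3 * gseq (j + 3) - gseq (j + 2)

/-- The square array `t`: `t i 1 = 1` for `i ≥ 1`, `t 1 j = gseq j`, and
`t i j = t (i-1) (j-1) + t (i-1) j + t i (j-1)` for `i, j ≥ 2`.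
(Values with a zero index are junk.) -/
def tarr : ℕ → ℕ → ℤ
  | _, 0 => 0
  | _, 1 => 1
  | 0, _ => 0
  | 1, j => gseq j
  | i + 2, j + 2 => tarr (i + 1) (j + 1) + tarr (i + 1) (j + 2) + tarr (i + 2) (j + 1)

/-!
Let `F n = ∑ₖ t(n,k) Xᵏ` be the generating function of the `n`-th row. The recursion of the
array reads `(1 - X) F (n+2) = (1 + X) F (n+1)`, and the recursion of `g` gives
`q(X) F 1 = X q(-X)` with `q = 1 + X - 3X² + X³`. Hence `F n (X) F n (-X)` does not depend on `n`,
and equals `-X²` (row `0` is just `X`). The signed convolution is minus the coefficient of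
`X^(j+1)` in `F n (-X) F n (X)`.
-/

open PowerSeries Finset

namespace PowerSeries

variable {R : Type*} [CommRing R]

/-- `f(-X) f(X)`, the norm of `f` for the extension `R⟦X²⟧ ⊆ R⟦X⟧`. -/
noncomputable def evenNorm (f : R⟦X⟧) : R⟦X⟧ := evalNegHom f * f

theorem evalNegHom_evalNegHom (f : R⟦X⟧) : evalNegHom (evalNegHom f) = f := by
  simp [evalNegHom, rescale_rescale]

theorem evenNorm_mul (f g : R⟦X⟧) : evenNorm (f * g) = evenNorm f * evenNorm g := by
  simp only [evenNorm, map_mul]; ring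

theorem evenNorm_evalNegHom (f : R⟦X⟧) : evenNorm (evalNegHom f) = evenNorm f := by
  rw [evenNorm, evenNorm, evalNegHom_evalNegHom, mul_comm]

theorem evenNorm_X : evenNorm (X : R⟦X⟧) = -X ^ 2 := by
  simp [evenNorm, sq]

theorem evenNorm_ne_zero [IsDomain R] {f : R⟦X⟧} (hf : f ≠ 0) : evenNorm f ≠ 0 := by
  refine mul_ne_zero (fun h => hf ?_) hf
  rw [← evalNegHom_evalNegHom f, h, map_zero]

theorem coeff_succ_evenNorm_mk (a : ℕ → R) (ha : a 0 = 0) (j : ℕ) :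
    coeff (j + 1) (evenNorm (mk a)) =
      -∑ k ∈ Icc 1 j, (-1) ^ (k - 1) * a k * a (j + 1 - k) := by
  rw [evenNorm, coeff_mul, Nat.sum_antidiagonal_eq_sum_range_succ_mk, sum_range_succ,
    range_eq_Ico, sum_eq_sum_Ico_succ_bot j.succ_pos, zero_add, Nat.succ_eq_add_one,
    Ico_add_one_right_eq_Icc, ← sum_neg_distrib]
  simp only [evalNegHom, coeff_rescale, coeff_mk, Nat.sub_self, ha, mul_zero, zero_mul, add_zero,
    zero_add]
  refine sum_congr rfl fun k hk => ?_
  obtain ⟨i, rfl⟩ := Nat.exists_eq_add_of_le' (mem_Icc.1 hk).1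
  simp only [Nat.add_sub_cancel, pow_succ]
  ring

end PowerSeries

theorem tarr_zero (n : ℕ) : tarr n 0 = 0 := by simp [tarr]

theorem tarr_one (n : ℕ) : tarr n 1 = 1 := by simp [tarr]

theorem tarr_add_two_add_two (m j : ℕ) :
    tarr (m + 2) (j + 2) = tarr (m + 1) (j + 1) + tarr (m + 1) (j + 2) + tarr (m + 2) (j + 1) := by
  simp [tarr]

theorem tarr_one_left (j : ℕ) : tarr 1 j = gseq j := by
  rcases j with _ | _ | j <;> simp [tarr, gseq]

noncomputable def rowSeries (n : ℕ) : ℤ⟦X⟧ := mk (tarr n)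

theorem rowSeries_zero : rowSeries 0 = X := by
  ext (_ | _ | j) <;> simp [rowSeries, tarr, coeff_X]

theorem one_sub_X_mul_rowSeries (m : ℕ) :
    (1 - X) * rowSeries (m + 2) = (1 + X) * rowSeries (m + 1) := by
  ext (_ | _ | j)
  · simp [rowSeries, tarr_zero]
  · simp [sub_mul, add_mul, rowSeries, tarr_zero, tarr_one]
  · simp only [sub_mul, add_mul, one_mul, map_sub, map_add, coeff_succ_X_mul, rowSeries, coeff_mk,
      tarr_add_two_add_two]
    ring

theorem mul_rowSeries_one :
    (1 + X - 3 * X ^ 2 + X ^ 3) * rowSeries 1 = X - X ^ 2 - 3 * X ^ 3 - X ^ 4 := by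
  rw [show (3 : ℤ⟦X⟧) = C 3 by simp]
  ext j
  simp only [add_mul, sub_mul, one_mul, mul_assoc, map_add, map_sub, coeff_C_mul, coeff_X_pow_mul',
    coeff_X_pow, coeff_X, rowSeries, coeff_mk, tarr_one_left]
  rcases j with _ | _ | _ | _ | _ | j <;> simp [coeff_succ_X_mul, tarr_one_left, gseq]
  ring

theorem evenNorm_rowSeries_one : evenNorm (rowSeries 1) = -X ^ 2 := by
  set q : ℤ⟦X⟧ := 1 + X - 3 * X ^ 2 + X ^ 3
  have hq : q ≠ 0 := fun h => by simpa [q] using congrArg constantCoeff h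
  apply mul_left_cancel₀ (evenNorm_ne_zero hq)
  calc evenNorm q * evenNorm (rowSeries 1)
      = evenNorm (X * evalNegHom q) := by
        rw [← evenNorm_mul, mul_rowSeries_one]; congr 1; simp [q, map_ofNat]; ring
    _ = evenNorm q * -X ^ 2 := by rw [evenNorm_mul, evenNorm_X, evenNorm_evalNegHom, mul_comm]

theorem evenNorm_rowSeries_add_two (m : ℕ) :
    evenNorm (rowSeries (m + 2)) = evenNorm (rowSeries (m + 1)) := by
  have h1X : (1 + X : ℤ⟦X⟧) ≠ 0 := fun h => by simpa using congrArg constantCoeff h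
  apply mul_left_cancel₀ (evenNorm_ne_zero h1X)
  calc evenNorm (1 + X) * evenNorm (rowSeries (m + 2))
      = evenNorm ((1 - X) * rowSeries (m + 2)) := by
        rw [evenNorm_mul, ← evenNorm_evalNegHom (1 + X)]; simp [sub_eq_add_neg]
    _ = evenNorm (1 + X) * evenNorm (rowSeries (m + 1)) := by
        rw [one_sub_X_mul_rowSeries, evenNorm_mul]

theorem evenNorm_rowSeries : ∀ n, evenNorm (rowSeries n) = -X ^ 2
  | 0 => by rw [rowSeries_zero, evenNorm_X]
  | 1 => evenNorm_rowSeries_one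
  | m + 2 => by rw [evenNorm_rowSeries_add_two, evenNorm_rowSeries (m + 1)]

theorem tarr_signed_convolution_general (n j : ℕ) :
    ∑ k ∈ Finset.Icc 1 j, (-1 : ℤ) ^ (k - 1) * tarr n k * tarr n (j + 1 - k) =
      if j = 1 then 1 else 0 := by
  have h := coeff_succ_evenNorm_mk (tarr n) (tarr_zero n) j
  rw [← rowSeries, evenNorm_rowSeries, map_neg, coeff_X_pow, neg_inj] at h
  simp [← h]

/-- The signed convolution of each row of the array with itself vanishes except
in degree one: for `n ≥ 1` and `j ≥ 1`,
`Σ_{k=1}^{j} (-1)^(k-1) t(n,k) t(n,j+1-k)` is `1` if `j = 1` and `0` otherwise. -/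
theorem tarr_signed_convolution (n j : ℕ) (hn : 1 ≤ n) (hj : 1 ≤ j) :
    ∑ k ∈ Finset.Icc 1 j, (-1 : ℤ) ^ (k - 1) * tarr n k * tarr n (j + 1 - k) =
      if j = 1 then 1 else 0 :=
  tarr_signed_convolution_general n j
end

section
/- Define f : ℕ≥1 → ℕ by f(1) = 2, f(2) = 4, and f(n) = 2·f(n-1) + f(n-2) for n > 2. Then for every n ≥ 1, f(n) = 2·Σ_{j=1}^{n} d(n-j, j-1), where d is the Delannoy array; that is, f(n) is twice the n-th anti-diagonal sum of the Delannoy numbers. -/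
/-- The Delannoy numbers. -/
def delannoy : ℕ → ℕ → ℕ
  | 0, _ => 1
  | _ + 1, 0 => 1
  | p + 1, q + 1 => delannoy p (q + 1) + delannoy (p + 1) q + delannoy p q

/-- Twice the Pell numbers: `f 1 = 2`, `f 2 = 4`, `f n = 2·f (n-1) + f (n-2)`
for `n > 2`. (`f 0` is a junk value.) -/
def fseq : ℕ → ℕ
  | 0 => 0
  | 1 => 2
  | 2 => 4
  | n + 3 => 2 * fseq (n + 2) + fseq (n + 1)

/-!
Writing `S n` for the sum of `delannoy i j` over `i + j = n`, peel off the two boundary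
entries (both equal to `1`) of the antidiagonal `n + 2` and expand every interior entry by
the Delannoy recursion: the three resulting sums are `S (n + 1) - 1`, `S (n + 1) - 1` and
`S n`, so `S (n + 2) = 2 S (n + 1) + S n`. Since `S 0 = 1` and `S 1 = 2`, `fseq (n + 1)`
and `2 S n` satisfy the same recursion with the same initial values.
-/

open Finset Finset.Nat

@[simp]
theorem delannoy_zero_left (q : ℕ) : delannoy 0 q = 1 := by
  rw [delannoy]

@[simp]
theorem delannoy_zero_right (p : ℕ) : delannoy p 0 = 1 := by
  cases p <;> rw [delannoy]

theorem delannoy_succ_succ (p q : ℕ) :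
    delannoy (p + 1) (q + 1) = delannoy p (q + 1) + delannoy (p + 1) q + delannoy p q := by
  rw [delannoy]

def delannoyAntidiagSum (n : ℕ) : ℕ :=
  ∑ x ∈ antidiagonal n, delannoy x.1 x.2

theorem delannoyAntidiagSum_add_two (n : ℕ) :
    delannoyAntidiagSum (n + 2) = 2 * delannoyAntidiagSum (n + 1) + delannoyAntidiagSum n := by
  have peel_left : delannoyAntidiagSum (n + 1) =
      1 + ∑ x ∈ antidiagonal n, delannoy (x.1 + 1) x.2 := by
    rw [delannoyAntidiagSum, sum_antidiagonal_succ, delannoy_zero_left]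
  have peel_right : delannoyAntidiagSum (n + 1) =
      1 + ∑ x ∈ antidiagonal n, delannoy x.1 (x.2 + 1) := by
    rw [delannoyAntidiagSum, sum_antidiagonal_succ', delannoy_zero_right]
  have peel_both : delannoyAntidiagSum (n + 2) =
      2 + ∑ x ∈ antidiagonal n, delannoy (x.1 + 1) (x.2 + 1) := by
    rw [delannoyAntidiagSum, sum_antidiagonal_succ, sum_antidiagonal_succ', delannoy_zero_left,
      delannoy_zero_right, ← add_assoc]
  have unfold_n : delannoyAntidiagSum n = ∑ x ∈ antidiagonal n, delannoy x.1 x.2 := rfl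
  simp only [delannoy_succ_succ, sum_add_distrib] at peel_both
  omega

theorem fseq_succ_eq_two_mul_delannoyAntidiagSum (n : ℕ) :
    fseq (n + 1) = 2 * delannoyAntidiagSum n := by
  induction n using Nat.twoStepInduction with
  | zero => simp [fseq, delannoyAntidiagSum]
  | one => simp [fseq, delannoyAntidiagSum, sum_antidiagonal_succ]
  | more n ih₀ ih₁ => rw [fseq, ih₀, ih₁, delannoyAntidiagSum_add_two]; ring

theorem sum_Icc_delannoy_eq_delannoyAntidiagSum (n : ℕ) :
    ∑ j ∈ Icc 1 (n + 1), delannoy (n + 1 - j) (j - 1) = delannoyAntidiagSum n := by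
  refine sum_nbij' (fun j => (n + 1 - j, j - 1)) (fun x => x.2 + 1) ?_ ?_ ?_ ?_ (fun _ _ => rfl) <;>
    rintro _ h <;>
    simp only [mem_Icc, HasAntidiagonal.mem_antidiagonal, Prod.ext_iff] at h ⊢ <;>
    omega

theorem fseq_eq_twice_antidiagonal_sum_general (n : ℕ) :
    fseq n = 2 * ∑ j ∈ Finset.Icc 1 n, delannoy (n - j) (j - 1) := by
  cases n with
  | zero => rfl
  | succ n => rw [fseq_succ_eq_two_mul_delannoyAntidiagSum, sum_Icc_delannoy_eq_delannoyAntidiagSum]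

/-- For `n ≥ 1`, `f(n)` is twice the `n`-th anti-diagonal sum of the Delannoy
numbers: `f(n) = 2·Σ_{j=1}^{n} d(n-j, j-1)`. -/
theorem fseq_eq_twice_antidiagonal_sum (n : ℕ) (hn : 1 ≤ n) :
    fseq n = 2 * ∑ j ∈ Finset.Icc 1 n, delannoy (n - j) (j - 1) :=
  fseq_eq_twice_antidiagonal_sum_general n
end
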